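/- arXiv:1309.2237 — 8 statements merged into one kernel-verified Lean document; each statement's English description precedes it below -/
import Mathlib

section
/- Let G be a finite group and let g be a non-central element of G whose centralizer C_G(g) is abelian. Then g is not a vertex of any forbidden subgraph of the commuting graph Γ(G); that is, for every subset S of G∖Z(G) containing g, the induced subgraph of Γ(G) on S is not isomorphic to a cycle of odd length at least 5, nor to the complement of such a cycle. -/
open SimpleGraph

/-- A simple graph is *perfect* if every induced subgraph has chromatic number
equal to its clique number. -/
def SimpleGraph.IsPerfectGraph {V : Type*} (G : SimpleGraph V) : Prop :=
  ∀ s : Set V, (G.induce s).chromaticNumber = ((G.induce s).cliqueNum : ℕ∞)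

/-- The commuting graph of a group `G`: vertices are the non-central elements of `G`,
with distinct vertices joined by an edge whenever they commute. -/
def commGraph (G : Type*) [Group G] :
    SimpleGraph {g : G // g ∉ Subgroup.center G} where
  Adj x y := x ≠ y ∧ Commute (x : G) (y : G)
  symm := ⟨fun _ _ h => ⟨h.1.symm, h.2.symm⟩⟩
  loopless := ⟨fun _ h => h.1 rfl⟩

/-- A set `S` of vertices carries a *forbidden subgraph* of `Γ` if the induced
subgraph on `S` is isomorphic to a cycle of odd length at least `5`, or to the
complement of such a cycle. -/
def SimpleGraph.IsForbidden {V : Type*} (Γ : SimpleGraph V) (S : Set V) : Prop :=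
  ∃ n : ℕ, Odd n ∧ 5 ≤ n ∧
    (Nonempty (Γ.induce S ≃g cycleGraph n) ∨ Nonempty (Γ.induce S ≃g (cycleGraph n)ᶜ))

/-!
The neighbours of `g` in the commuting graph all lie in the abelian group `C_G(g)`, so they
commute pairwise: `g` is a simplicial vertex (its neighbourhood is a clique), and this
persists in every induced subgraph containing `g`. But no vertex of a cycle of length
`n ≥ 4` is simplicial (its two neighbours `v ± 1` are not adjacent), and neither is a vertex
`v` of the complement of a cycle of length `n ≥ 5` (its neighbours `v + 2`, `v + 3` are not
adjacent).
-/

namespace SimpleGraph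

variable {V W : Type*} {G : SimpleGraph V} {H : SimpleGraph W}

def IsSimplicial (G : SimpleGraph V) (v : V) : Prop :=
  G.IsClique (G.neighborSet v)

theorem IsSimplicial.comap (f : H ↪g G) {w : W} (h : G.IsSimplicial (f w)) :
    H.IsSimplicial w := fun _ hx _ hy hxy =>
  f.map_adj_iff.mp <| h (f.map_adj_iff.mpr hx) (f.map_adj_iff.mpr hy) (f.injective.ne hxy)

theorem IsSimplicial.induce {v : V} (h : G.IsSimplicial v) (s : Set V) (hv : v ∈ s) :
    (G.induce s).IsSimplicial ⟨v, hv⟩ :=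
  h.comap (Embedding.induce s)

theorem IsSimplicial.map (e : G ≃g H) {v : V} (h : G.IsSimplicial v) :
    H.IsSimplicial (e v) :=
  IsSimplicial.comap e.symm.toEmbedding (by simpa using h)

section cycleGraph

open Fin.CommRing

theorem not_isSimplicial_cycleGraph {n : ℕ} (v : Fin (n + 4)) :
    ¬ (cycleGraph (n + 4)).IsSimplicial v := by
  have h₁ : (v - 1) - (v + 1) = -2 := by ring
  have h₂ : (v + 1) - (v - 1) = 2 := by ring
  rw [IsSimplicial, cycleGraph_neighborSet, isClique_pair, cycleGraph_adj, ← sub_ne_zero, h₁, h₂]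
  simp (disch := omega) [Fin.ext_iff, Fin.val_neg', Nat.mod_eq_of_lt]

theorem not_isSimplicial_compl_cycleGraph {n : ℕ} (v : Fin (n + 5)) :
    ¬ (cycleGraph (n + 5))ᶜ.IsSimplicial v := by
  have hadj (a b : Fin (n + 5)) : (cycleGraph (n + 5))ᶜ.Adj (v + a) (v + b) ↔
      a ≠ b ∧ a - b ≠ 1 ∧ b - a ≠ 1 := by
    rw [compl_adj, cycleGraph_adj, add_sub_add_left_eq_sub, add_sub_add_left_eq_sub, Ne,
      add_right_inj]
    tauto
  have h₂ : (cycleGraph (n + 5))ᶜ.Adj v (v + 2) := by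
    simpa using (hadj 0 2).mpr
      (by simp (disch := omega) [Fin.ext_iff, Fin.val_neg', Nat.mod_eq_of_lt])
  have h₃ : (cycleGraph (n + 5))ᶜ.Adj v (v + 3) := by
    simpa using (hadj 0 3).mpr
      (by simp (disch := omega) [Fin.ext_iff, Fin.val_neg', Nat.mod_eq_of_lt])
  have h₂₃ : v + 2 ≠ v + 3 := by
    simp (disch := omega) [Fin.ext_iff, Nat.mod_eq_of_lt]
  exact fun h => (h h₂ h₃ h₂₃).2 (Or.inr (by ring))

end cycleGraph

theorem IsSimplicial.not_isForbidden {v : V} (h : G.IsSimplicial v) {S : Set V} (hv : v ∈ S) :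
    ¬ G.IsForbidden S := by
  rintro ⟨n, -, hn, ⟨⟨e⟩⟩ | ⟨⟨e⟩⟩⟩ <;> obtain ⟨m, rfl⟩ := Nat.exists_eq_add_of_le' hn
  · exact not_isSimplicial_cycleGraph (n := m + 1) _ ((h.induce S hv).map e)
  · exact not_isSimplicial_compl_cycleGraph _ ((h.induce S hv).map e)

end SimpleGraph

theorem commGraph_isSimplicial {G : Type*} [Group G] {g : G} (hg : g ∉ Subgroup.center G)
    (hab : ∀ x ∈ Subgroup.centralizer {g}, ∀ y ∈ Subgroup.centralizer {g}, Commute x y) :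
    (commGraph G).IsSimplicial ⟨g, hg⟩ := fun _ hx _ hy hxy =>
  ⟨hxy, hab _ (Subgroup.mem_centralizer_singleton_iff.mpr hx.2.eq.symm)
    _ (Subgroup.mem_centralizer_singleton_iff.mpr hy.2.eq.symm)⟩

theorem not_mem_forbidden_of_abelian_centralizer_general
    (G : Type*) [Group G] (g : G) (hg : g ∉ Subgroup.center G)
    (hab : ∀ x ∈ Subgroup.centralizer {g}, ∀ y ∈ Subgroup.centralizer {g}, Commute x y)
    (S : Set {x : G // x ∉ Subgroup.center G}) (hgS : ⟨g, hg⟩ ∈ S) :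
    ¬ (commGraph G).IsForbidden S :=
  (commGraph_isSimplicial hg hab).not_isForbidden hgS

theorem not_mem_forbidden_of_abelian_centralizer
    (G : Type*) [Group G] [Finite G] (g : G) (hg : g ∉ Subgroup.center G)
    (hab : ∀ x ∈ Subgroup.centralizer {g}, ∀ y ∈ Subgroup.centralizer {g}, Commute x y)
    (S : Set {x : G // x ∉ Subgroup.center G}) (hgS : ⟨g, hg⟩ ∈ S) :
    ¬ (commGraph G).IsForbidden S :=
  not_mem_forbidden_of_abelian_centralizer_general G g hg hab S hgS
end

section
/- Let G be a finite group such that the centralizer of every non-central element of G is abelian (i.e., G is an AC-group). Then the commuting graph Γ(G) is perfect. -/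
open SimpleGraph

/-! In an AC-group, commuting is transitive on non-central elements: if `x` and `z` both commute
with `y ∉ Z(G)`, they lie in the abelian centralizer of `y`. Hence the commuting graph is a
disjoint union of cliques, and so is each of its induced subgraphs. Such a graph has chromatic
number equal to its clique number. -/

open Finset

namespace SimpleGraph

variable {V : Type*} (G : SimpleGraph V)

/-- Cluster graphs, i.e. disjoint unions of complete graphs. -/
def IsClusterGraph : Prop :=
  ∀ ⦃x y z : V⦄, G.Adj x y → G.Adj y z → x ≠ z → G.Adj x z

variable {G}

theorem IsClusterGraph.induce (hG : G.IsClusterGraph) (s : Set V) :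
    (G.induce s).IsClusterGraph :=
  fun _ _ _ hxy hyz hxz => hG hxy hyz (Subtype.coe_injective.ne hxz)

section Rank

variable [Fintype V] [LinearOrder V] [DecidableRel G.Adj]

def lowerNeighborFinset (v : V) : Finset V :=
  {u | u < v ∧ G.Adj u v}

theorem IsClusterGraph.lowerNeighborFinset_ssubset (hG : G.IsClusterGraph) {v w : V}
    (hvw : G.Adj v w) (hwv : w < v) :
    G.lowerNeighborFinset w ⊂ G.lowerNeighborFinset v := by
  refine _root_.ssubset_iff_subset_ne.2 ⟨fun u hu => ?_, fun h => ?_⟩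
  · simp only [lowerNeighborFinset, mem_filter, mem_univ, true_and] at hu ⊢
    exact ⟨hu.1.trans hwv, hG hu.2 hvw.symm (hu.1.trans hwv).ne⟩
  · have : w ∈ G.lowerNeighborFinset v := by simp [lowerNeighborFinset, hwv, hvw.symm]
    rw [← h] at this
    simp [lowerNeighborFinset] at this

theorem IsClusterGraph.isClique_insert_lowerNeighborFinset (hG : G.IsClusterGraph) (v : V) :
    G.IsClique (insert v (G.lowerNeighborFinset v) : Finset V) := by
  intro a ha b hb hab
  simp only [lowerNeighborFinset, coe_insert, coe_filter, mem_univ, true_and, Set.mem_insert_iff,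
    Set.mem_ofPred_eq] at ha hb
  rcases ha with rfl | ⟨-, hav⟩ <;> rcases hb with rfl | ⟨-, hbv⟩
  · exact (hab rfl).elim
  · exact hbv.symm
  · exact hav
  · exact hG hav hbv.symm hab

theorem IsClusterGraph.card_lowerNeighborFinset_lt_cliqueNum (hG : G.IsClusterGraph) (v : V) :
    #(G.lowerNeighborFinset v) < G.cliqueNum := by
  have hcard := (hG.isClique_insert_lowerNeighborFinset v).card_le_cliqueNum
  rwa [card_insert_of_notMem (by simp [lowerNeighborFinset])] at hcard

end Rank

/-- Colour each vertex by the number of its neighbours preceding it in a well-order: adjacent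
vertices lie in one clique, where these counts are distinct. -/
theorem IsClusterGraph.colorable_cliqueNum [Finite V] (hG : G.IsClusterGraph) :
    G.Colorable G.cliqueNum := by
  classical
  have := Fintype.ofFinite V
  let := linearOrderOfSTO (@WellOrderingRel V)
  refine (colorable_iff_exists_bdd_nat_coloring _).2
    ⟨Coloring.mk (fun v => #(G.lowerNeighborFinset v)) fun {v w} hvw => ?_,
      hG.card_lowerNeighborFinset_lt_cliqueNum⟩
  rcases lt_trichotomy v w with h | rfl | h
  · exact (card_lt_card (hG.lowerNeighborFinset_ssubset hvw.symm h)).ne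
  · exact (G.irrefl hvw).elim
  · exact (card_lt_card (hG.lowerNeighborFinset_ssubset hvw h)).ne'

theorem IsClusterGraph.chromaticNumber_eq_cliqueNum [Finite V] (hG : G.IsClusterGraph) :
    G.chromaticNumber = G.cliqueNum :=
  le_antisymm hG.colorable_cliqueNum.chromaticNumber_le G.cliqueNum_le_chromaticNumber

theorem IsClusterGraph.isPerfectGraph [Finite V] (hG : G.IsClusterGraph) : G.IsPerfectGraph :=
  fun s => (hG.induce s).chromaticNumber_eq_cliqueNum

end SimpleGraph

theorem commute_trans_of_centralizer_comm {G : Type*} [Group G] {y : G}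
    (hy : ∀ x ∈ Subgroup.centralizer {y}, ∀ z ∈ Subgroup.centralizer {y}, Commute x z)
    {x z : G} (hxy : Commute x y) (hyz : Commute y z) : Commute x z :=
  hy x (Subgroup.mem_centralizer_singleton_iff.2 hxy) z
    (Subgroup.mem_centralizer_singleton_iff.2 hyz.symm)

theorem commGraph_isClusterGraph {G : Type*} [Group G]
    (hAC : ∀ g : G, g ∉ Subgroup.center G →
      ∀ x ∈ Subgroup.centralizer {g}, ∀ y ∈ Subgroup.centralizer {g}, Commute x y) :
    (commGraph G).IsClusterGraph :=
  fun _ y _ hxy hyz hxz =>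
    ⟨hxz, commute_trans_of_centralizer_comm (hAC y y.2) hxy.2 hyz.2⟩

theorem isPerfect_of_AC_group
    (G : Type*) [Group G] [Finite G]
    (hAC : ∀ g : G, g ∉ Subgroup.center G →
      ∀ x ∈ Subgroup.centralizer {g}, ∀ y ∈ Subgroup.centralizer {g}, Commute x y) :
    (commGraph G).IsPerfectGraph :=
  (commGraph_isClusterGraph hAC).isPerfectGraph
end

section
/- Let G be a finite group and let g and h be two distinct vertices of a forbidden subgraph of the commuting graph Γ(G); that is, suppose S ⊆ G∖Z(G) is a set with g, h ∈ S such that the induced subgraph of Γ(G) on S is isomorphic to a cycle of odd length at least 5 or to the complement of such a cycle. Then gh⁻¹ ∉ Z(G). -/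
open SimpleGraph

/-!
If `g * h⁻¹` is central, then `g` and `h` commute with exactly the same elements, so they are
twins of the commuting graph: every other vertex is adjacent to both or to neither. Twins stay
twins in induced subgraphs, under isomorphisms and under complementation, but a cycle of length
at least `5` has no twins: the two neighbours of one vertex cannot both be neighbours of another.
-/

open Fin.CommRing

namespace SimpleGraph

variable {V W : Type*}

def AreTwins (G : SimpleGraph V) (a b : V) : Prop :=
  ∀ x, x ≠ a → x ≠ b → (G.Adj a x ↔ G.Adj b x)

theorem AreTwins.compl {G : SimpleGraph V} {a b : V} (h : G.AreTwins a b) :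
    Gᶜ.AreTwins a b := fun x hxa hxb => by
  simp only [compl_adj, h x hxa hxb, hxa.symm, hxb.symm, ne_eq, not_false_eq_true, true_and]

theorem AreTwins.comap {G : SimpleGraph V} {H : SimpleGraph W} (f : H ↪g G) {a b : W}
    (h : G.AreTwins (f a) (f b)) : H.AreTwins a b := fun x hxa hxb => by
  simpa only [f.map_adj_iff] using h (f x) (f.injective.ne hxa) (f.injective.ne hxb)

theorem AreTwins.of_iso {G : SimpleGraph V} {H : SimpleGraph W} (φ : G ≃g H) {a b : V}
    (h : G.AreTwins a b) : H.AreTwins (φ a) (φ b) :=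
  AreTwins.comap φ.symm.toEmbedding (by simpa using h)

theorem cycleGraph_adj_iff {n : ℕ} {u v : Fin (n + 2)} :
    (cycleGraph (n + 2)).Adj u v ↔ v = u - 1 ∨ v = u + 1 := by
  rw [← mem_neighborSet, cycleGraph_neighborSet]
  rfl

theorem not_areTwins_cycleGraph {n : ℕ} (hn : 5 ≤ n) {a b : Fin n} (hab : a ≠ b) :
    ¬(cycleGraph n).AreTwins a b := by
  obtain ⟨n, rfl⟩ : ∃ m, n = m + 5 := ⟨n - 5, by omega⟩
  have cast_ne_zero (k : ℕ) (hk₀ : 0 < k) (hk : k < n + 5) : (k : Fin (n + 5)) ≠ 0 := by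
    rw [Ne, Fin.natCast_eq_zero]
    exact fun hd => absurd (Nat.le_of_dvd hk₀ hd) (by omega)
  have h1 : (1 : Fin (n + 5)) ≠ 0 := mod_cast cast_ne_zero 1 (by omega) (by omega)
  have h2 : (2 : Fin (n + 5)) ≠ 0 := mod_cast cast_ne_zero 2 (by omega) (by omega)
  have h3 : (3 : Fin (n + 5)) ≠ 0 := mod_cast cast_ne_zero 3 (by omega) (by omega)
  have h4 : (4 : Fin (n + 5)) ≠ 0 := mod_cast cast_ne_zero 4 (by omega) (by omega)
  intro htw
  -- each neighbour `a ± 1` of `a` is either `b` itself or a neighbour of `b` other than `a`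
  have hplus : b = a + 1 ∨ b = a + 2 := by
    by_cases hb : a + 1 = b
    · exact .inl hb.symm
    have hadj := (htw (a + 1) (fun e => h1 (by linear_combination e)) hb).mp
      (cycleGraph_adj_iff.mpr (.inr rfl))
    rcases cycleGraph_adj_iff.mp hadj with e | e
    · exact .inr (by linear_combination -e)
    · exact absurd (by linear_combination e) hab
  have hminus : b = a - 1 ∨ b = a - 2 := by
    by_cases hb : a - 1 = b
    · exact .inl hb.symm
    have hadj := (htw (a - 1) (fun e => h1 (by linear_combination -e)) hb).mp
      (cycleGraph_adj_iff.mpr (.inl rfl))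
    rcases cycleGraph_adj_iff.mp hadj with e | e
    · exact absurd (by linear_combination e) hab
    · exact .inr (by linear_combination -e)
  rcases hplus with hp | hp <;> rcases hminus with hm | hm
  · exact h2 (by linear_combination hm - hp)
  · exact h3 (by linear_combination hm - hp)
  · exact h3 (by linear_combination hm - hp)
  · exact h4 (by linear_combination hm - hp)

theorem IsForbidden.not_areTwins {Γ : SimpleGraph V} {S : Set V} (hS : Γ.IsForbidden S)
    {a b : S} (hab : a ≠ b) : ¬(Γ.induce S).AreTwins a b := by
  obtain ⟨n, -, hn, ⟨⟨φ⟩⟩ | ⟨⟨φ⟩⟩⟩ := hS <;> intro htw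
  · exact not_areTwins_cycleGraph hn (φ.injective.ne hab) (htw.of_iso φ)
  · exact not_areTwins_cycleGraph hn (φ.injective.ne hab) (by simpa using (htw.of_iso φ).compl)

end SimpleGraph

theorem commute_iff_commute_of_mul_inv_mem_center {G : Type*} [Group G] {g h : G}
    (hz : g * h⁻¹ ∈ Subgroup.center G) (x : G) : Commute g x ↔ Commute h x := by
  have hzx : Commute (g * h⁻¹) x := (Subgroup.mem_center_iff.mp hz x).symm
  constructor <;> intro hc
  · simpa using hzx.inv_left.mul_left hc
  · simpa using hzx.mul_left hc

theorem commGraph_areTwins_of_mul_inv_mem_center {G : Type*} [Group G]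
    {g h : {x : G // x ∉ Subgroup.center G}} (hz : (g : G) * (h : G)⁻¹ ∈ Subgroup.center G) :
    (commGraph G).AreTwins g h := fun x hxg hxh =>
  and_congr (iff_of_true hxg.symm hxh.symm) (commute_iff_commute_of_mul_inv_mem_center hz x)

theorem mul_inv_not_mem_center_of_forbidden_general
    (G : Type*) [Group G]
    (g h : {x : G // x ∉ Subgroup.center G}) (hgh : g ≠ h)
    (S : Set {x : G // x ∉ Subgroup.center G}) (hgS : g ∈ S) (hhS : h ∈ S)
    (hforb : (commGraph G).IsForbidden S) :
    (g : G) * (h : G)⁻¹ ∉ Subgroup.center G := fun hz =>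
  hforb.not_areTwins (a := ⟨g, hgS⟩) (b := ⟨h, hhS⟩) (fun e => hgh (congrArg Subtype.val e))
    ((commGraph_areTwins_of_mul_inv_mem_center hz).comap (Embedding.induce S))

theorem mul_inv_not_mem_center_of_forbidden
    (G : Type*) [Group G] [Finite G]
    (g h : {x : G // x ∉ Subgroup.center G}) (hgh : g ≠ h)
    (S : Set {x : G // x ∉ Subgroup.center G}) (hgS : g ∈ S) (hhS : h ∈ S)
    (hforb : (commGraph G).IsForbidden S) :
    (g : G) * (h : G)⁻¹ ∉ Subgroup.center G :=
  mul_inv_not_mem_center_of_forbidden_general G g h hgh S hgS hhS hforb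
end

section
/- Let G be a finite group, Z a central subgroup of G, K = G/Z, and φ : G → K the natural projection. Let Ω ⊆ K, and suppose that for each ω ∈ Ω the elements of the fiber φ⁻¹(ω) are pairwise non-conjugate in G. Then the commuting graph on Ω is perfect if and only if the commuting graph on φ⁻¹(Ω) is perfect. -/
/-!
Because `Z` is central, two elements of one fibre of `G → G ⧸ Z` commute with each other and
with the same elements of `G`; and for `g` over `Ω`, if `gZ` and `yZ` commute then `ygy⁻¹` is a
conjugate of `g` in `gZ`, hence equal to `g`. So the commuting graph on the preimage of `Ω` is
the one on `Ω` with every vertex blown up into a clique (its fibre). Blowing up vertices into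
cliques preserves perfectness in both directions: the original graph is an induced subgraph
(via a section), and conversely Lovász's replication lemma shows that adding an adjacent twin
`v'` to a vertex `v` of a perfect graph keeps `χ = ω`. For that, colour `H - v'` with
`k = ω(H - v')` colours; if `v` lies in a maximum clique, `ω(H) = k + 1` and `v'` gets a new
colour; otherwise the other vertices of the colour class of `v`, together with `v'`, form an
independent set whose removal leaves clique number `< k`.
-/

open SimpleGraph

/-- The commuting graph on a subset `Ω` of a group: vertices are the elements of `Ω`,
with distinct vertices joined by an edge whenever they commute. -/
def commGraphOn {G : Type*} [Group G] (Ω : Set G) : SimpleGraph Ω where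
  Adj x y := x ≠ y ∧ Commute (x : G) (y : G)
  symm := ⟨fun _ _ h => ⟨h.1.symm, h.2.symm⟩⟩
  loopless := ⟨fun _ h => h.1 rfl⟩

namespace SimpleGraph

variable {V W : Type*} {G : SimpleGraph V} {H : SimpleGraph W}

theorem Embedding.cliqueNum_le [Finite W] (f : G ↪g H) : G.cliqueNum ≤ H.cliqueNum := by
  classical
  obtain ⟨s, hs⟩ := G.exists_isNClique_cliqueNum
  have hmap : H.IsNClique G.cliqueNum (s.map f.toEmbedding) :=
    (hs.map (f := f.toEmbedding)).mono <|
      (map_le_iff_le_comap _ _ _).mpr fun _ _ => f.map_adj_iff.mpr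
  exact hmap.card_eq ▸ hmap.isClique.card_le_cliqueNum

theorem Iso.cliqueNum_eq [Finite V] [Finite W] (e : G ≃g H) : G.cliqueNum = H.cliqueNum :=
  le_antisymm e.toEmbedding.cliqueNum_le e.symm.toEmbedding.cliqueNum_le

theorem IsPerfectGraph.chromaticNumber_eq_of_embedding [Finite V] (hH : H.IsPerfectGraph)
    (f : G ↪g H) : G.chromaticNumber = G.cliqueNum := by
  let e := f.isoInduceRange
  rw [chromaticNumber_congr e, e.cliqueNum_eq]
  exact hH _

theorem IsPerfectGraph.of_embedding [Finite V] (hH : H.IsPerfectGraph) (f : G ↪g H) :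
    G.IsPerfectGraph := fun s =>
  hH.chromaticNumber_eq_of_embedding (f.comp (Embedding.induce s))

noncomputable def induceInduceIso (G : SimpleGraph V) (s : Set V) (u : Set s) :
    (G.induce s).induce u ≃g G.induce (Subtype.val '' u) where
  toEquiv := Equiv.Set.image _ u Subtype.val_injective
  map_rel_iff' := Iff.rfl

theorem IsNClique.induce {n : ℕ} {C : Finset W} {u : Set W} [DecidablePred (· ∈ u)]
    (hC : H.IsNClique n C) (hCu : ↑C ⊆ u) : (H.induce u).IsNClique n (C.subtype (· ∈ u)) := by
  rwa [isNClique_induce_iff, Finset.subtype_map_of_mem hCu]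

theorem IsClique.card_le_cliqueNum_induce [Finite W] {C : Finset W} {u : Set W}
    (hC : H.IsClique C) (hCu : ↑C ⊆ u) : C.card ≤ (H.induce u).cliqueNum := by
  classical
  have hCn := (IsNClique.mk hC rfl).induce hCu
  exact hCn.card_eq ▸ hCn.isClique.card_le_cliqueNum

theorem exists_isNClique_cliqueNum_induce (u : Set W) :
    ∃ C : Finset W, ↑C ⊆ u ∧ H.IsNClique (H.induce u).cliqueNum C := by
  obtain ⟨t, ht⟩ := (H.induce u).exists_isNClique_cliqueNum
  rw [isNClique_induce_iff] at ht
  exact ⟨_, by simp, ht⟩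

theorem cliqueNum_induce_mono [Finite W] {u K : Set W} (huK : u ⊆ K) :
    (H.induce u).cliqueNum ≤ (H.induce K).cliqueNum := by
  obtain ⟨C, hCu, hC⟩ := H.exists_isNClique_cliqueNum_induce u
  exact hC.card_eq ▸ hC.isClique.card_le_cliqueNum_induce (hCu.trans huK)

theorem IsNClique.exists_color_eq {n : ℕ} {t : Finset V} (ht : G.IsNClique n t)
    (c : G.Coloring (Fin n)) (i : Fin n) : ∃ z ∈ t, c z = i := by
  classical
  have hinj : Set.InjOn c t := fun a ha b hb hab =>
    of_not_not fun hne => c.valid (ht.isClique ha hb hne) hab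
  have himage : t.image c = Finset.univ := Finset.eq_univ_of_card _ (by
    rw [Finset.card_image_of_injOn hinj, ht.card_eq, Fintype.card_fin])
  simpa using (himage ▸ Finset.mem_univ i : i ∈ t.image c)

theorem Colorable.succ_of_induce_of_isIndepSet_compl {n : ℕ} {u : Set W}
    (hu : (H.induce u).Colorable n) (hind : H.IsIndepSet uᶜ) : H.Colorable (n + 1) := by
  classical
  obtain ⟨c⟩ := hu
  refine ⟨Coloring.mk (fun z => if h : z ∈ u then (c ⟨z, h⟩).castSucc else Fin.last n) ?_⟩
  intro a b hab hcol
  by_cases ha : a ∈ u <;> by_cases hb : b ∈ u <;> simp only [ha, hb, dite_true, dite_false] at hcol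
  · exact c.valid (show (H.induce u).Adj ⟨a, ha⟩ ⟨b, hb⟩ from hab) (Fin.castSucc_injective _ hcol)
  · exact (Fin.castSucc_lt_last _).ne hcol
  · exact (Fin.castSucc_lt_last _).ne hcol.symm
  · exact hind ha hb hab.ne hab

section Twins

variable [Finite W] {v v' : W}

theorem chromaticNumber_le_cliqueNum_of_twin_mem_clique (hadj : H.Adj v v')
    (htwin : ∀ z, z ≠ v' → H.Adj v z → H.Adj v' z) {k : ℕ}
    (hcol : (H.induce {v'}ᶜ).Colorable k) {C : Finset W} (hCK : ↑C ⊆ ({v'}ᶜ : Set W))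
    (hC : H.IsNClique k C) (hvC : v ∈ C) : H.chromaticNumber ≤ H.cliqueNum := by
  classical
  have hins : H.IsNClique (k + 1) (insert v' C) := hC.insert fun b hb => by
    by_cases hbv : b = v
    · exact hbv ▸ hadj.symm
    · exact htwin b (hCK hb) (hC.isClique hvC hb (Ne.symm hbv))
  calc H.chromaticNumber ≤ (k + 1 : ℕ) :=
        (hcol.succ_of_induce_of_isIndepSet_compl (by simp)).chromaticNumber_le
    _ ≤ H.cliqueNum := by exact_mod_cast hins.card_eq ▸ hins.isClique.card_le_cliqueNum

theorem chromaticNumber_le_cliqueNum_of_twin_notMem_clique (hadj : H.Adj v v')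
    (htwin : ∀ z, z ≠ v → H.Adj v' z → H.Adj v z)
    (hperf : ∀ u : Set W, v' ∉ u →
      (H.induce u).chromaticNumber = ((H.induce u).cliqueNum : ℕ∞))
    (hnotMem : ∀ C : Finset W, ↑C ⊆ ({v'}ᶜ : Set W) →
      H.IsNClique (H.induce {v'}ᶜ).cliqueNum C → v ∉ C) :
    H.chromaticNumber ≤ H.cliqueNum := by
  classical
  set K : Set W := {v'}ᶜ
  set k := (H.induce K).cliqueNum
  have hv : v ∈ K := hadj.ne
  obtain ⟨c⟩ : (H.induce K).Colorable k :=
    chromaticNumber_le_iff_colorable.mp (hperf K (by simp [K])).le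
  set A : Set W := {z | ∃ hz : z ∈ K, z ≠ v ∧ c ⟨z, hz⟩ = c ⟨v, hv⟩}
  have hvA : ∀ z ∈ A, ¬ H.Adj v z := fun z ⟨hz, _, hcz⟩ hvz =>
    c.valid (show (H.induce K).Adj ⟨v, hv⟩ ⟨z, hz⟩ from hvz) hcz.symm
  have hind : H.IsIndepSet (K \ A)ᶜ := by
    intro a ha b hb hab hadj_ab
    simp only [Set.compl_sdiff, Set.mem_union, K, compl_compl, Set.mem_singleton_iff] at ha hb
    rcases ha with ha | rfl <;> rcases hb with hb | rfl
    · obtain ⟨ha, -, hca⟩ := ha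
      obtain ⟨hb, -, hcb⟩ := hb
      exact c.valid (show (H.induce K).Adj ⟨a, ha⟩ ⟨b, hb⟩ from hadj_ab) (hca.trans hcb.symm)
    · exact hvA a ha (htwin a ha.2.1 hadj_ab.symm)
    · exact hvA b hb (htwin b hb.2.1 hadj_ab)
    · exact hab rfl
  have hlt : (H.induce (K \ A)).cliqueNum < k := by
    obtain ⟨C, hCu, hC⟩ := H.exists_isNClique_cliqueNum_induce (K \ A)
    refine (cliqueNum_induce_mono Set.sdiff_subset).lt_of_ne fun heq => ?_
    rw [heq] at hC
    have hCK : ↑C ⊆ K := hCu.trans Set.sdiff_subset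
    obtain ⟨z, hzC, hcz⟩ := (hC.induce hCK).exists_color_eq c (c ⟨v, hv⟩)
    rw [Finset.mem_subtype] at hzC
    have hzv : (z : W) ≠ v := fun h => hnotMem C hCK hC (h ▸ hzC)
    exact (hCu hzC).2 ⟨z.2, hzv, hcz⟩
  have hcolu : (H.induce (K \ A)).Colorable (H.induce (K \ A)).cliqueNum :=
    chromaticNumber_le_iff_colorable.mp (hperf _ fun h => h.1 rfl).le
  calc H.chromaticNumber ≤ ((H.induce (K \ A)).cliqueNum + 1 : ℕ) :=
        (hcolu.succ_of_induce_of_isIndepSet_compl hind).chromaticNumber_le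
    _ ≤ k := by exact_mod_cast hlt
    _ ≤ H.cliqueNum := by exact_mod_cast cliqueNum_induce_le K

theorem chromaticNumber_eq_cliqueNum_of_adj_twins (hadj : H.Adj v v')
    (htwin : ∀ z, z ≠ v → z ≠ v' → (H.Adj v z ↔ H.Adj v' z))
    (hperf : ∀ u : Set W, v' ∉ u →
      (H.induce u).chromaticNumber = ((H.induce u).cliqueNum : ℕ∞)) :
    H.chromaticNumber = H.cliqueNum := by
  refine le_antisymm ?_ H.cliqueNum_le_chromaticNumber
  by_cases hmem : ∃ C : Finset W, ↑C ⊆ ({v'}ᶜ : Set W) ∧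
      H.IsNClique (H.induce {v'}ᶜ).cliqueNum C ∧ v ∈ C
  · obtain ⟨C, hCK, hC, hvC⟩ := hmem
    exact chromaticNumber_le_cliqueNum_of_twin_mem_clique hadj
      (fun z hz hvz => (htwin z hvz.ne' hz).mp hvz)
      (chromaticNumber_le_iff_colorable.mp (hperf _ (by simp)).le) hCK hC hvC
  · push Not at hmem
    exact chromaticNumber_le_cliqueNum_of_twin_notMem_clique hadj
      (fun z hz hvz => (htwin z hz hvz.ne').mpr hvz) hperf hmem

end Twins

def cliqueBlowup (H : SimpleGraph W) (f : V → W) : SimpleGraph V where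
  Adj a b := a ≠ b ∧ (f a = f b ∨ H.Adj (f a) (f b))
  symm := ⟨fun _ _ h => ⟨h.1.symm, h.2.imp Eq.symm fun h => h.symm⟩⟩
  loopless := ⟨fun _ h => h.1 rfl⟩

theorem cliqueBlowup_adj_iff {f : V → W} {a b : V} (hab : f a = f b → a = b) :
    (H.cliqueBlowup f).Adj a b ↔ H.Adj (f a) (f b) := by
  by_cases h : a = b
  · subst h
    simp only [SimpleGraph.irrefl]
  · exact ⟨fun hadj => hadj.2.resolve_left (mt hab h), fun hadj => ⟨h, Or.inr hadj⟩⟩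

theorem cliqueBlowup_adj_iff_of_apply_eq {f : V → W} {x y z : V} (hxy : f x = f y) (hxz : x ≠ z)
    (hyz : y ≠ z) : (H.cliqueBlowup f).Adj x z ↔ (H.cliqueBlowup f).Adj y z := by
  simp only [cliqueBlowup, hxy, ne_eq, hxz, hyz, not_false_eq_true, true_and]

theorem IsPerfectGraph.cliqueBlowup [Finite V] (hH : H.IsPerfectGraph) (f : V → W) :
    (H.cliqueBlowup f).IsPerfectGraph := by
  intro s
  induction s using WellFoundedLT.induction with
  | ind s IH =>
    by_cases hinj : Set.InjOn f s
    · exact hH.chromaticNumber_eq_of_embedding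
        { toFun := fun a => f a
          inj' := hinj.injective
          map_rel_iff' := fun {a b} =>
            (cliqueBlowup_adj_iff (H := H) (f := f) (a := a) (b := b) (hinj a.2 b.2)).symm }
    · simp only [Set.InjOn, not_forall] at hinj
      obtain ⟨x, hx, y, hy, hfxy, hxy⟩ := hinj
      refine chromaticNumber_eq_cliqueNum_of_adj_twins (v := ⟨x, hx⟩) (v' := ⟨y, hy⟩)
        ⟨hxy, Or.inl hfxy⟩ (fun z hzx hzy => cliqueBlowup_adj_iff_of_apply_eq hfxy
          (fun h => hzx (Subtype.ext h).symm) (fun h => hzy (Subtype.ext h).symm)) fun u hu => ?_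
      let e := (H.cliqueBlowup f).induceInduceIso s u
      rw [chromaticNumber_congr e, e.cliqueNum_eq]
      refine IH _ ⟨Subtype.coe_image_subset s u, fun hsu => ?_⟩
      obtain ⟨a, ha, rfl⟩ := hsu hy
      exact hu ha

theorem IsPerfectGraph.of_cliqueBlowup [Finite V] {f : V → W} (hf : f.Surjective)
    (h : (H.cliqueBlowup f).IsPerfectGraph) : H.IsPerfectGraph := by
  have : Finite W := Finite.of_surjective f hf
  refine h.of_embedding
    { toFun := Function.surjInv hf
      inj' := Function.injective_surjInv hf
      map_rel_iff' := fun {a b} => ?_ }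
  change (H.cliqueBlowup f).Adj (Function.surjInv hf a) (Function.surjInv hf b) ↔ H.Adj a b
  rw [cliqueBlowup_adj_iff, Function.surjInv_eq hf, Function.surjInv_eq hf]
  exact fun hab => congrArg _ (by simpa only [Function.surjInv_eq hf] using hab)

theorem isPerfectGraph_cliqueBlowup_iff [Finite V] {f : V → W} (hf : f.Surjective) :
    (H.cliqueBlowup f).IsPerfectGraph ↔ H.IsPerfectGraph :=
  ⟨.of_cliqueBlowup hf, fun hH => hH.cliqueBlowup f⟩

end SimpleGraph

namespace QuotientGroup

variable {G : Type*} [Group G] {Z : Subgroup G}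

theorem commute_of_mk_eq (hZ : Z ≤ Subgroup.center G) {x y : G} (h : (x : G ⧸ Z) = y) :
    Commute x y := by
  have hz : x⁻¹ * y ∈ Subgroup.center G := hZ (QuotientGroup.eq.mp h)
  rw [← mul_inv_cancel_left x y]
  exact (Commute.refl x).mul_right (Subgroup.mem_center_iff.mp hz x)

theorem commute_of_commute_mk [Z.Normal] {x y : G}
    (hx : ∀ g : G, (g : G ⧸ Z) = x → IsConj x g → g = x)
    (h : Commute (x : G ⧸ Z) (y : G ⧸ Z)) : Commute x y := by
  have hyx : y * x * y⁻¹ = x :=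
    hx _ (by rw [QuotientGroup.mk_mul, QuotientGroup.mk_mul, ← h.eq, QuotientGroup.mk_inv,
      mul_inv_cancel_right]) (isConj_iff.mpr ⟨y, rfl⟩)
  exact (mul_inv_eq_iff_eq_mul.mp hyx).symm

end QuotientGroup

theorem commGraphOn_preimage_eq_cliqueBlowup {G : Type*} [Group G] {Z : Subgroup G} [Z.Normal]
    (hZ : Z ≤ Subgroup.center G) {Ω : Set (G ⧸ Z)}
    (hfib : ∀ ω ∈ Ω, ∀ g h : G, QuotientGroup.mk' Z g = ω → QuotientGroup.mk' Z h = ω →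
      IsConj g h → g = h) :
    commGraphOn (QuotientGroup.mk' Z ⁻¹' Ω) =
      (commGraphOn Ω).cliqueBlowup (Ω.restrictPreimage (QuotientGroup.mk' Z)) := by
  ext x y
  refine and_congr_right fun _ => ⟨fun hxy => ?_, ?_⟩
  · by_cases hmk : Ω.restrictPreimage (QuotientGroup.mk' Z) x =
        Ω.restrictPreimage (QuotientGroup.mk' Z) y
    · exact Or.inl hmk
    · exact Or.inr ⟨hmk, hxy.map (QuotientGroup.mk' Z)⟩
  · rintro (hmk | ⟨-, hmk⟩)
    · exact QuotientGroup.commute_of_mk_eq hZ (congrArg Subtype.val hmk)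
    · exact QuotientGroup.commute_of_commute_mk
        (fun g hg hconj => (hfib _ x.2 x g rfl hg hconj).symm) hmk

theorem commGraphOn_isPerfect_iff_preimage_isPerfect
    (G : Type*) [Group G] [Finite G] (Z : Subgroup G) [Z.Normal]
    (hZ : Z ≤ Subgroup.center G) (Ω : Set (G ⧸ Z))
    (hfib : ∀ ω ∈ Ω, ∀ g h : G, QuotientGroup.mk' Z g = ω → QuotientGroup.mk' Z h = ω →
      IsConj g h → g = h) :
    (commGraphOn Ω).IsPerfectGraph ↔
      (commGraphOn ((QuotientGroup.mk' Z : G →* G ⧸ Z) ⁻¹' Ω)).IsPerfectGraph := by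
  rw [commGraphOn_preimage_eq_cliqueBlowup hZ hfib, SimpleGraph.isPerfectGraph_cliqueBlowup_iff
    (Set.restrictPreimage_surjective _ (QuotientGroup.mk'_surjective Z))]
end

section
/- Let n be a natural number and let Sym_n be the symmetric group on n letters. Then the commuting graph Γ(Sym_n) is perfect if and only if n ≤ 4. -/
open SimpleGraph

/-!
For `n ≥ 5` the transpositions `(0 1), (2 3), (0 4), (1 2), (3 4)` induce a pentagon in the
commuting graph, and a pentagon needs three colours but contains no triangle.

For `n ≤ 4`, rank the double transpositions below all other vertices. Then the neighbours of each
vertex of no larger rank form a clique: the double transpositions commute pairwise, and every other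
non-central element of `S₄` has an abelian centralizer. Such a ranking restricts to induced
subgraphs, and greedy colouring along any linear order refining it uses at most `ω` colours,
since each vertex together with its earlier neighbours is a clique.
-/

namespace SimpleGraph

variable {V W : Type*} (G : SimpleGraph V)

lemma IsClique.ncard_le_cliqueNum [Finite V] {s : Set V} (hs : G.IsClique s) :
    s.ncard ≤ G.cliqueNum := by
  have := s.toFinite.fintype
  simpa only [Set.ncard_eq_toFinset_card'] using
    IsClique.card_le_cliqueNum (tc := by simpa only [Set.coe_toFinset] using hs)

section Greedy

variable [LinearOrder V] [WellFoundedLT V]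

noncomputable def greedyColoring : V → ℕ :=
  wellFounded_lt.fix (C := fun _ ↦ ℕ) fun v c ↦
    sInf {k | ∀ u (h : u < v), G.Adj u v → c u h ≠ k}

lemma greedyColoring_eq (v : V) :
    G.greedyColoring v = sInf (G.greedyColoring '' {u | u < v ∧ G.Adj u v})ᶜ := by
  rw [greedyColoring, WellFounded.fix_eq]
  congr 1
  ext k
  simp only [Set.mem_ofPred_eq, Set.mem_compl_iff, Set.mem_image, not_exists, not_and, and_imp]

variable [Finite V]

lemma greedyColoring_ne_of_lt {u v : V} (huv : u < v) (h : G.Adj u v) :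
    G.greedyColoring u ≠ G.greedyColoring v := by
  have hfin := (Set.toFinite {u | u < v ∧ G.Adj u v}).image G.greedyColoring
  rw [G.greedyColoring_eq v]
  exact fun he ↦ Nat.sInf_mem hfin.infinite_compl.nonempty ⟨u, ⟨huv, h⟩, he⟩

lemma greedyColoring_le_ncard (v : V) :
    G.greedyColoring v ≤ {u | u < v ∧ G.Adj u v}.ncard := by
  set S := G.greedyColoring '' {u | u < v ∧ G.Adj u v}
  have hS : S.Finite := (Set.toFinite _).image _
  obtain ⟨k, hk, hkS⟩ : ∃ k ∈ Finset.range (S.ncard + 1), k ∉ hS.toFinset :=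
    Finset.exists_mem_notMem_of_card_lt_card (by simp [Set.ncard_eq_toFinset_card S hS])
  calc G.greedyColoring v ≤ k :=
        G.greedyColoring_eq v ▸ Nat.sInf_le (hS.mem_toFinset.not.mp hkS)
    _ ≤ S.ncard := Finset.mem_range_succ_iff.mp hk
    _ ≤ _ := Set.ncard_image_le (Set.toFinite _)

theorem colorable_of_ncard_lt {n : ℕ} (h : ∀ v, {u | u < v ∧ G.Adj u v}.ncard < n) :
    G.Colorable n := by
  refine (colorable_iff_exists_bdd_nat_coloring n).mpr ⟨Coloring.mk G.greedyColoring
    fun {u v} huv ↦ ?_, fun v ↦ (G.greedyColoring_le_ncard v).trans_lt (h v)⟩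
  rcases lt_or_gt_of_ne (G.ne_of_adj huv) with hlt | hlt
  · exact G.greedyColoring_ne_of_lt hlt huv
  · exact (G.greedyColoring_ne_of_lt hlt huv.symm).symm

end Greedy

/-- A perfect elimination ordering in which several vertices may share a rank. -/
def IsCliqueRanking (f : V → ℕ) : Prop :=
  ∀ v, G.IsClique {u | G.Adj u v ∧ f u ≤ f v}

variable {G}

lemma IsCliqueRanking.comap {f : V → ℕ} (hf : G.IsCliqueRanking f) (φ : W ↪ V) :
    (G.comap φ).IsCliqueRanking (f ∘ φ) :=
  fun v _ hu _ hw huw ↦ hf (φ v) hu hw (φ.injective.ne huw)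

theorem IsCliqueRanking.colorable_cliqueNum [Finite V] {f : V → ℕ} (hf : G.IsCliqueRanking f) :
    G.Colorable G.cliqueNum := by
  obtain ⟨N, ⟨e⟩⟩ := Finite.exists_equiv_fin V
  let _ : LinearOrder V := LinearOrder.lift' (fun v ↦ toLex (f v, (e v : ℕ)))
    fun u v h ↦ e.injective (Fin.ext (congrArg (fun x ↦ (ofLex x).2) h))
  refine G.colorable_of_ncard_lt fun v ↦ ?_
  have hf_le {u : V} (h : u < v) : f u ≤ f v :=
    (Prod.Lex.lt_iff.mp (show toLex (f u, (e u : ℕ)) < toLex (f v, (e v : ℕ)) from h)).elim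
      le_of_lt fun h ↦ h.1.le
  set L := {u | u < v ∧ G.Adj u v}
  have hL : G.IsClique L :=
    (hf v).subset fun u (hu : u ∈ L) ↦
      show G.Adj u v ∧ f u ≤ f v from ⟨hu.2, hf_le hu.1⟩
  have hvL : v ∉ L := fun hv ↦ lt_irrefl v hv.1
  calc L.ncard < (insert v L).ncard := by rw [Set.ncard_insert_of_notMem hvL]; omega
    _ ≤ G.cliqueNum := (isClique_insert.mpr ⟨hL, fun u hu _ ↦ hu.2.symm⟩).ncard_le_cliqueNum

theorem IsCliqueRanking.isPerfectGraph [Finite V] {f : V → ℕ} (hf : G.IsCliqueRanking f) :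
    G.IsPerfectGraph := fun s ↦
  le_antisymm (hf.comap (Function.Embedding.subtype _)).colorable_cliqueNum.chromaticNumber_le
    (G.induce s).cliqueNum_le_chromaticNumber

theorem not_isPerfectGraph_of_pentagon (p : Fin 5 → V) (hadj : ∀ i, G.Adj (p i) (p (i + 1)))
    (hnadj : ∀ i, ¬ G.Adj (p i) (p (i + 2))) : ¬ G.IsPerfectGraph := by
  classical
  intro hG
  set H := G.induce (Set.range p)
  let q (i : Fin 5) : Set.range p := ⟨p i, i, rfl⟩
  have hq : ∀ a, ∃ i, q i = a := fun ⟨_, i, hi⟩ ↦ ⟨i, Subtype.ext hi⟩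
  have hcons : ∀ i j, H.Adj (q i) (q j) → j = i + 1 ∨ i = j + 1 := by
    intro i j h
    have : ∀ i j : Fin 5, j = i ∨ j = i + 1 ∨ i = j + 1 ∨ j = i + 2 ∨ i = j + 2 := by
      decide
    rcases this i j with rfl | hj | hi | rfl | rfl
    · exact absurd h (H.loopless.irrefl _)
    · exact .inl hj
    · exact .inr hi
    · exact absurd h (hnadj i)
    · exact absurd h.symm (hnadj j)
  have hfree : H.CliqueFree 3 := by
    intro t ht
    obtain ⟨a, b, c, hab, hac, hbc, -⟩ := is3Clique_iff.mp ht
    obtain ⟨i, rfl⟩ := hq a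
    obtain ⟨j, rfl⟩ := hq b
    obtain ⟨k, rfl⟩ := hq c
    have : ∀ i j k : Fin 5, j = i + 1 ∨ i = j + 1 → k = i + 1 ∨ i = k + 1 →
      k = j + 1 ∨ j = k + 1 → False := by decide
    exact this i j k (hcons i j hab) (hcons i k hac) (hcons j k hbc)
  have hnot2 : ¬ H.Colorable 2 := by
    rintro ⟨C⟩
    have : ∀ c : Fin 5 → Fin 2, ∃ i, c i = c (i + 1) := by decide
    obtain ⟨i, hi⟩ := this (C ∘ q)
    exact C.valid (show H.Adj (q i) (q (i + 1)) from hadj i) hi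
  obtain ⟨t, ht⟩ := H.exists_isNClique_cliqueNum
  have hω : H.cliqueNum ≤ 2 := by
    by_contra! h
    exact hfree.mono h t ht
  have hχ : H.chromaticNumber ≤ 2 := by rw [hG]; exact_mod_cast hω
  exact hnot2 (chromaticNumber_le_iff_colorable.mp hχ)

end SimpleGraph

instance {G : Type*} [Group G] [DecidableEq G] : DecidableRel (commGraph G).Adj :=
  fun x y ↦ inferInstanceAs (Decidable (x ≠ y ∧ (x : G) * y = y * x))

theorem commGraph_not_isPerfectGraph_of_pentagon {G : Type*} [Group G] (p : Fin 5 → G)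
    (hne : ∀ i, p i ≠ p (i + 1)) (hcomm : ∀ i, Commute (p i) (p (i + 1)))
    (hncomm : ∀ i, ¬ Commute (p i) (p (i + 2))) : ¬ (commGraph G).IsPerfectGraph :=
  not_isPerfectGraph_of_pentagon
    (fun i ↦ ⟨p i, fun h ↦ hncomm i (Subgroup.mem_center_iff.mp h (p (i + 2))).symm⟩)
    (fun i ↦ ⟨Subtype.coe_ne_coe.mp (hne i), hcomm i⟩) (fun i h ↦ hncomm i h.2)

open Equiv

theorem commGraph_perm_not_isPerfectGraph {n : ℕ} (hn : 5 ≤ n) :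
    ¬ (commGraph (Perm (Fin n))).IsPerfectGraph := by
  -- Cyclically adjacent transpositions are disjoint, those two steps apart share a point.
  let p : Fin 5 → Perm (Fin 5) := ![swap 0 1, swap 2 3, swap 0 4, swap 1 2, swap 3 4]
  have hp : ∀ i, p i ≠ p (i + 1) ∧ Commute (p i) (p (i + 1)) ∧
      ¬ Commute (p i) (p (i + 2)) := by
    unfold Commute SemiconjBy
    decide
  let φ := Perm.viaEmbeddingHom (Fin.castLEEmb hn)
  have hφ : Function.Injective φ := Perm.viaEmbeddingHom_injective _
  exact commGraph_not_isPerfectGraph_of_pentagon (φ ∘ p) (fun i ↦ hφ.ne (hp i).1)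
    (fun i ↦ (hp i).2.1.map φ) (fun i ↦ (commute_map_iff hφ).not.mpr (hp i).2.2)

/-- In `S₄` the fixed-point-free involutions are the double transpositions. -/
def fixedPointFreeInvolutionRank (n : ℕ) (g : {g : Perm (Fin n) // g ∉ Subgroup.center _}) :
    ℕ :=
  if (g : Perm (Fin n)) * g = 1 ∧ ∀ x, (g : Perm (Fin n)) x ≠ x then 0 else 1

set_option synthInstance.maxSize 200 in
theorem commGraph_perm_isCliqueRanking {n : ℕ} (hn : n ≤ 4) :
    (commGraph (Perm (Fin n))).IsCliqueRanking (fixedPointFreeInvolutionRank n) := by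
  simp only [IsCliqueRanking, IsClique, Set.Pairwise, Set.mem_ofPred_eq]
  interval_cases n <;> decide

theorem symmetricGroup_commGraph_isPerfect_iff (n : ℕ) :
    (commGraph (Equiv.Perm (Fin n))).IsPerfectGraph ↔ n ≤ 4 :=
  ⟨fun h ↦ not_lt.mp fun h5 ↦ commGraph_perm_not_isPerfectGraph h5 h,
    fun hn ↦ (commGraph_perm_isCliqueRanking hn).isPerfectGraph⟩
end

section
/- Let F be a finite field and let G be any subgroup of the general linear group GL_2(F). Then the commuting graph Γ(G) is perfect. In particular, the commuting graph of SL_2(F) is perfect. -/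
open SimpleGraph

/-!
Over a field, solving the commutation equations shows that every matrix commuting with a
non-scalar `2 × 2` matrix `A` has the form `x • 1 + y • A`; hence the centralizer of `A` is
commutative. For a group embedded in `GL₂(K)` this makes commutation transitive through
non-central elements, so the commuting graph and all its induced subgraphs are disjoint unions of
cliques. Such a graph is coloured with `ω` colours by giving each vertex the number of its
neighbours that precede it in a fixed linear order.
-/

open Finset in
theorem SimpleGraph.chromaticNumber_eq_cliqueNum_of_adj_trans {V : Type*} [Finite V]
    (G : SimpleGraph V) (h : ∀ ⦃x y z⦄, G.Adj x y → G.Adj y z → x ≠ z → G.Adj x z) :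
    G.chromaticNumber = G.cliqueNum := by
  classical
  cases nonempty_fintype V
  let _ : LinearOrder V := LinearOrder.lift' _ (Fintype.equivFin V).injective
  let earlier (v : V) : Finset V := {u | G.Adj v u ∧ u < v}
  have isClique_insert (v : V) : G.IsClique (insert v (earlier v) : Finset V) := by
    intro a ha b hb hab
    simp only [coe_insert, Set.mem_insert_iff, mem_coe, mem_filter, mem_univ, true_and,
      earlier] at ha hb
    rcases ha with rfl | ⟨ha, -⟩ <;> rcases hb with rfl | ⟨hb, -⟩
    exacts [absurd rfl hab, hb, ha.symm, h ha.symm hb hab]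
  have card_lt (v : V) : #(earlier v) < G.cliqueNum := by
    simpa [earlier] using (isClique_insert v).card_le_cliqueNum
  have card_lt_card {v w : V} (hvw : G.Adj v w) (hlt : v < w) : #(earlier v) < #(earlier w) := by
    refine card_lt_card ((ssubset_insert (a := v) ?_).trans_subset ?_)
    · simp [earlier]
    · intro u hu
      simp only [mem_insert, mem_filter, mem_univ, true_and, earlier] at hu ⊢
      rcases hu with rfl | ⟨hu, hlt'⟩
      · exact ⟨hvw.symm, hlt⟩
      · exact ⟨h hvw.symm hu (hlt'.trans hlt).ne', hlt'.trans hlt⟩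
  have colorable : G.Colorable G.cliqueNum := ⟨.mk (fun v => ⟨#(earlier v), card_lt v⟩) <| by
    intro v w hvw heq
    rcases hvw.ne.lt_or_gt with hlt | hlt
    · exact (card_lt_card hvw hlt).ne (Fin.val_eq_of_eq heq)
    · exact (card_lt_card hvw.symm hlt).ne' (Fin.val_eq_of_eq heq)⟩
  exact le_antisymm colorable.chromaticNumber_le G.cliqueNum_le_chromaticNumber

theorem SimpleGraph.isPerfectGraph_of_adj_trans {V : Type*} [Finite V] (G : SimpleGraph V)
    (h : ∀ ⦃x y z⦄, G.Adj x y → G.Adj y z → x ≠ z → G.Adj x z) : G.IsPerfectGraph :=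
  fun s => (G.induce s).chromaticNumber_eq_cliqueNum_of_adj_trans
    fun _ _ _ hxy hyz hxz => h hxy hyz (Subtype.coe_injective.ne hxz)

theorem commGraph_isPerfectGraph_of_commute_trans {G : Type*} [Group G] [Finite G]
    (h : ∀ ⦃x y z : G⦄, y ∉ Subgroup.center G → Commute x y → Commute y z → Commute x z) :
    (commGraph G).IsPerfectGraph :=
  isPerfectGraph_of_adj_trans _ fun _ y _ hxy hyz hxz =>
    ⟨hxz, h y.2 hxy.2 hyz.2⟩

namespace Matrix

variable {K : Type*} [Field K]

theorem exists_eq_smul_one_add_smul_of_commute {A B : Matrix (Fin 2) (Fin 2) K}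
    (hA : A ∉ Set.range (scalar (Fin 2))) (h : Commute A B) : ∃ x y : K, B = x • 1 + y • A := by
  obtain ⟨a, b, c, d, rfl⟩ : ∃ a b c d, A = !![a, b; c, d] := ⟨_, _, _, _, eta_fin_two A⟩
  obtain ⟨p, q, r, s, rfl⟩ : ∃ p q r s, B = !![p, q; r, s] := ⟨_, _, _, _, eta_fin_two B⟩
  have e := h.eq
  simp only [cons_mul, vecMul_cons, head_cons, smul_cons, smul_eq_mul, smul_empty, tail_cons,
    empty_vecMul, add_zero, add_cons, empty_add_empty, empty_mul, Equiv.symm_apply_apply,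
    EmbeddingLike.apply_eq_iff_eq, vecCons_inj, and_true] at e
  obtain ⟨⟨e00, e01⟩, e10, -⟩ := e
  simp only [one_fin_two, smul_of, smul_cons, smul_eq_mul, mul_one, mul_zero, smul_empty,
    of_add_of, add_cons, head_cons, tail_cons, zero_add, empty_add_empty,
    EmbeddingLike.apply_eq_iff_eq, vecCons_inj, and_true]
  by_cases hb : b = 0
  · by_cases hc : c = 0
    · have had : a - d ≠ 0 := by
        refine sub_ne_zero.2 fun had => hA ⟨a, ?_⟩
        rw [scalar_apply, diagonal_fin_two, hb, hc, had]
      refine ⟨p - (p - s) / (a - d) * a, (p - s) / (a - d), ⟨by ring, ?_⟩, ?_, ?_⟩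
      · subst hb hc
        exact (mul_left_cancel₀ had (by linear_combination e01)).trans (mul_zero _).symm
      · subst hb hc
        exact (mul_left_cancel₀ had (by linear_combination -e10)).trans (mul_zero _).symm
      · field_simp; ring
    · refine ⟨p - r / c * a, r / c, ⟨by ring, ?_⟩, by field_simp, ?_⟩
      · field_simp; linear_combination -e00
      · field_simp; linear_combination -e10
  · refine ⟨p - q / b * a, q / b, ⟨by ring, by field_simp⟩, ?_, ?_⟩
    · field_simp; linear_combination e00
    · field_simp; linear_combination e01

theorem commute_of_commute_of_notMem_range_scalar {A B C : Matrix (Fin 2) (Fin 2) K}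
    (hA : A ∉ Set.range (scalar (Fin 2))) (hB : Commute A B) (hC : Commute A C) :
    Commute B C := by
  obtain ⟨x, y, rfl⟩ := exists_eq_smul_one_add_smul_of_commute hA hB
  obtain ⟨z, w, rfl⟩ := exists_eq_smul_one_add_smul_of_commute hA hC
  have hA' : Commute A (z • 1 + w • A) :=
    ((Commute.one_right A).smul_right z).add_right ((Commute.refl A).smul_right w)
  exact ((Commute.one_left _).smul_left x).add_left (hA'.smul_left y)

end Matrix

theorem commute_trans_of_injective_fin_two {K H : Type*} [Field K] [Group H]
    {f : H →* Matrix (Fin 2) (Fin 2) K} (hf : Function.Injective f) ⦃x y z : H⦄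
    (hy : y ∉ Subgroup.center H) (hxy : Commute x y) (hyz : Commute y z) : Commute x z := by
  have hfy : f y ∉ Set.range (Matrix.scalar (Fin 2)) := by
    rintro ⟨c, hc⟩
    refine hy (Subgroup.mem_center_iff.2 fun g => (Commute.of_map hf ?_).eq)
    rw [← hc]
    exact (Matrix.scalar_commute c (Commute.all c) (f g)).symm
  exact .of_map hf <| Matrix.commute_of_commute_of_notMem_range_scalar hfy
    (hxy.map f).symm (hyz.map f)

theorem subgroup_GL2_commGraph_isPerfect (F : Type*) [Field F] [Fintype F] :
    (∀ G : Subgroup (Matrix.GeneralLinearGroup (Fin 2) F),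
      (commGraph G).IsPerfectGraph) ∧
    (commGraph (Matrix.SpecialLinearGroup (Fin 2) F)).IsPerfectGraph :=
  ⟨fun G => commGraph_isPerfectGraph_of_commute_trans <| commute_trans_of_injective_fin_two
      (f := (Units.coeHom _).comp G.subtype) (Units.val_injective.comp Subtype.coe_injective),
    commGraph_isPerfectGraph_of_commute_trans <| commute_trans_of_injective_fin_two
      Matrix.SpecialLinearGroup.coeMonoidHom_injective⟩
end

section
/- Let F be a finite field of odd cardinality q with q ≥ 5, and let PGL_2(q) denote the quotient of GL_2(F) by its center. Then the commuting graph Γ(PGL_2(q)) is not perfect. -/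
/-!
In `PGL₂(F)` the images of `A, B ∈ GL₂(F)` commute iff `AB = λBA` for a scalar `λ`; taking
determinants gives `λ² = 1`, so `A` and `B` either commute or anticommute. Anticommuting
matrices give distinct commuting elements of `PGL₂(F)` as soon as `2 ≠ 0`. Five trace-zero
matrices, depending on a parameter `c ∉ {0, 1, -1, -2}` (which exists once `q ≥ 5`), are
arranged so that cyclically consecutive ones anticommute while the others neither commute nor
anticommute. Their images span an induced `5`-cycle of the commuting graph, which is
triangle-free but has chromatic number `3`.
-/

open SimpleGraph

open Matrix
open scoped MatrixGroups

namespace SimpleGraph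

variable {V : Type*} {G : SimpleGraph V}

lemma cliqueNum_lt_of_cliqueFree {n : ℕ} (h : G.CliqueFree n) : G.cliqueNum < n := by
  obtain ⟨s, hs⟩ := G.exists_isNClique_cliqueNum
  by_contra! hn
  exact h.mono hn s hs

lemma cycleGraph_five_cliqueFree_three : (cycleGraph 5).CliqueFree 3 := by
  intro s hs
  obtain ⟨a, b, c, hab, hac, hbc, -⟩ := is3Clique_iff.mp hs
  rw [cycleGraph_adj] at hab hac hbc
  revert a b c
  decide

theorem not_isPerfectGraph_of_cycleGraph_five_embedding (f : cycleGraph 5 ↪g G) :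
    ¬ G.IsPerfectGraph := by
  intro hG
  let e := f.isoInduceRange
  have hχ : (G.induce (Set.range f)).chromaticNumber = 3 := by
    rw [← chromaticNumber_congr e, chromaticNumber_cycleGraph_of_odd 5 (by norm_num) (by decide)]
  have hω : (G.induce (Set.range f)).cliqueNum < 3 :=
    cliqueNum_lt_of_cliqueFree (cycleGraph_five_cliqueFree_three.comap ⟨e.symm.toCopy⟩)
  have hperf := hG (Set.range f)
  rw [hχ] at hperf
  exact hω.ne (by exact_mod_cast hperf.symm)

end SimpleGraph

lemma Fin.five_cases (i j : Fin 5) :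
    j = i ∨ j = i + 1 ∨ i = j + 1 ∨ j = i + 2 ∨ i = j + 2 := by
  revert i j
  decide

namespace commGraph

variable {G : Type*} [Group G]

theorem not_isPerfectGraph_of_pentagon (g : Fin 5 → G) (hne : ∀ i, g i ≠ g (i + 1))
    (hcomm : ∀ i, Commute (g i) (g (i + 1))) (hncomm : ∀ i, ¬ Commute (g i) (g (i + 2))) :
    ¬ (commGraph G).IsPerfectGraph := by
  have hcenter i : g i ∉ Subgroup.center G := fun h =>
    hncomm i (Subgroup.mem_center_iff.mp h _).symm
  have hinj : Function.Injective g := by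
    intro i j hij
    rcases Fin.five_cases i j with rfl | rfl | rfl | rfl | rfl
    · rfl
    · exact absurd hij (hne i)
    · exact absurd hij.symm (hne j)
    · exact absurd (by rw [hij]) (hncomm i)
    · exact absurd (by rw [hij]) (hncomm j)
  have hadj i j :
      (commGraph G).Adj ⟨g i, hcenter i⟩ ⟨g j, hcenter j⟩ ↔ (cycleGraph 5).Adj i j := by
    have h21 : (-2 : Fin 5) ≠ 1 := by decide
    simp only [commGraph, ne_eq, Subtype.mk.injEq, cycleGraph_adj]
    rcases Fin.five_cases i j with rfl | rfl | rfl | rfl | rfl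
    · simp
    · simp [hne i, hcomm i]
    · simp [(hne j).symm, (hcomm j).symm]
    · simp [hncomm i, h21]
    · simp [mt Commute.symm (hncomm j), h21]
  exact not_isPerfectGraph_of_cycleGraph_five_embedding
    { toFun i := ⟨g i, hcenter i⟩
      inj' i j hij := hinj (congrArg Subtype.val hij)
      map_rel_iff' := hadj _ _ }

end commGraph

namespace Matrix.ProjGenLinGroup

variable {n R : Type*} [Fintype n] [DecidableEq n] [CommRing R]

lemma commute_mk_iff_exists_scalar {A B : GL n R} :
    Commute (mk A) (mk B) ↔ ∃ u : Rˣ, A * B * GeneralLinearGroup.scalar n u = B * A := by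
  rw [Commute, SemiconjBy, ← map_mul, ← map_mul, mk_eq_mk_iff]

lemma commute_mk_of_mul_eq_neg {A B : GL n R} (h : (A * B : Matrix n n R) = -(B * A)) :
    Commute (mk A) (mk B) := by
  refine commute_mk_iff_exists_scalar.mpr ⟨-1, Units.ext ?_⟩
  rw [Units.val_mul, GeneralLinearGroup.coe_scalar, Units.val_neg, Units.val_one, map_neg,
    map_one, mul_neg_one, Units.val_mul, h, neg_neg, Units.val_mul]

lemma commute_of_mk_eq_mk {A B : GL n R} (h : mk A = mk B) : Commute A B := by
  obtain ⟨u, rfl⟩ := mk_eq_mk_iff.mp h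
  exact (Commute.refl A).mul_right (GeneralLinearGroup.scalar_commute u A).symm

lemma mk_ne_mk_of_mul_eq_neg [Nonempty n] (h2 : (2 : R) ≠ 0) {A B : GL n R}
    (h : (A * B : Matrix n n R) = -(B * A)) : mk A ≠ mk B := by
  intro hAB
  have hcomm : (A * B : Matrix n n R) = B * A := by
    rw [← Units.val_mul, ← Units.val_mul, (commute_of_mk_eq_mk hAB).eq]
  have hsum : (A * B : Matrix n n R) + A * B = 0 := by
    rw [add_eq_zero_iff_eq_neg, hcomm, ← h, hcomm]
  have h1 : (2 : R) • (1 : Matrix n n R) = 0 := by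
    rw [← (A * B).inv_mul, two_smul, ← mul_add, Units.val_mul, hsum, mul_zero]
  obtain ⟨i⟩ := ‹Nonempty n›
  exact h2 (by simpa using congrFun (congrFun h1 i) i)

lemma mul_eq_or_eq_neg_of_commute_mk [IsDomain R] {A B : GL (Fin 2) R}
    (h : Commute (mk A) (mk B)) :
    (A * B : Matrix (Fin 2) (Fin 2) R) = B * A ∨
      (A * B : Matrix (Fin 2) (Fin 2) R) = -(B * A) := by
  obtain ⟨u, hu⟩ := commute_mk_iff_exists_scalar.mp h
  have hu2 : (u : R) ^ 2 = 1 := by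
    have hdet := congrArg GeneralLinearGroup.det hu
    rw [map_mul, map_mul, map_mul, GeneralLinearGroup.det_scalar, Fintype.card_fin,
      mul_comm (GeneralLinearGroup.det B)] at hdet
    rw [← Units.val_pow_eq_pow_val, mul_eq_left.mp hdet, Units.val_one]
  rw [← Units.val_mul, ← Units.val_mul, ← hu]
  simp only [Units.val_mul, GeneralLinearGroup.coe_scalar]
  rcases sq_eq_one_iff.mp hu2 with h1 | h1 <;> rw [h1]
  · left; rw [map_one, mul_one]
  · right; rw [map_neg, map_one, mul_neg_one, neg_neg]

end Matrix.ProjGenLinGroup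

section Pentagon

variable {F : Type*} [Field F]

/-- For trace-zero `A, B` one has `AB + BA = tr(AB) • 1`: consecutive entries anticommute because
they are orthogonal for the trace form. -/
def pentagonMatrix (c : F) : Fin 5 → Matrix (Fin 2) (Fin 2) F :=
  ![!![1, 0; 0, -1], !![0, 1; 1, 0], !![1, c; -c, -1], !![c, c + 2; c, -c], !![0, c + 2; -c, 0]]

lemma pentagonMatrix_mul_add_one (c : F) (i : Fin 5) :
    pentagonMatrix c i * pentagonMatrix c (i + 1) =
      -(pentagonMatrix c (i + 1) * pentagonMatrix c i) := by
  fin_cases i <;> simp [pentagonMatrix] <;> grind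

variable {c : F}

lemma pentagonMatrix_mul_add_two_ne (h2 : (2 : F) ≠ 0) (hc0 : c ≠ 0) (hcm1 : c ≠ -1)
    (i : Fin 5) :
    pentagonMatrix c i * pentagonMatrix c (i + 2) ≠
      pentagonMatrix c (i + 2) * pentagonMatrix c i := by
  fin_cases i <;> simp [pentagonMatrix] <;> grind

lemma pentagonMatrix_mul_add_two_ne_neg (h2 : (2 : F) ≠ 0) (hc0 : c ≠ 0) (hcm1 : c ≠ -1)
    (i : Fin 5) :
    pentagonMatrix c i * pentagonMatrix c (i + 2) ≠
      -(pentagonMatrix c (i + 2) * pentagonMatrix c i) := by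
  fin_cases i <;> simp [pentagonMatrix] <;> grind

lemma det_pentagonMatrix_ne_zero (h2 : (2 : F) ≠ 0) (hc0 : c ≠ 0) (hc1 : c ≠ 1)
    (hcm1 : c ≠ -1) (hcm2 : c ≠ -2) (i : Fin 5) : (pentagonMatrix c i).det ≠ 0 := by
  fin_cases i <;> simp [pentagonMatrix, det_fin_two_of] <;> grind

theorem commGraph_pgl2_not_isPerfectGraph (h2 : (2 : F) ≠ 0) (hc0 : c ≠ 0) (hc1 : c ≠ 1)
    (hcm1 : c ≠ -1) (hcm2 : c ≠ -2) : ¬ (commGraph PGL(2, F)).IsPerfectGraph := by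
  open ProjGenLinGroup in
  let M i : GL (Fin 2) F := GeneralLinearGroup.mkOfDetNeZero (pentagonMatrix c i)
    (det_pentagonMatrix_ne_zero h2 hc0 hc1 hcm1 hcm2 i)
  refine commGraph.not_isPerfectGraph_of_pentagon (fun i => mk (M i))
    (fun i => mk_ne_mk_of_mul_eq_neg h2 (pentagonMatrix_mul_add_one c i))
    (fun i => commute_mk_of_mul_eq_neg (pentagonMatrix_mul_add_one c i)) (fun i h => ?_)
  rcases mul_eq_or_eq_neg_of_commute_mk h with h | h
  exacts [pentagonMatrix_mul_add_two_ne h2 hc0 hcm1 i h,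
    pentagonMatrix_mul_add_two_ne_neg h2 hc0 hcm1 i h]

end Pentagon

theorem pgl2_commGraph_not_isPerfect
    (F : Type*) [Field F] [Fintype F] (q : ℕ) (hq : Fintype.card F = q)
    (hodd : Odd q) (hq5 : 5 ≤ q) :
    ¬ (commGraph (Matrix.GeneralLinearGroup (Fin 2) F ⧸
        Subgroup.center (Matrix.GeneralLinearGroup (Fin 2) F))).IsPerfectGraph := by
  classical
  have h2 : (2 : F) ≠ 0 := Ring.two_ne_zero fun h => by
    have := FiniteField.even_card_of_char_two h
    rw [hq, Nat.odd_iff.mp hodd] at this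
    exact one_ne_zero this
  obtain ⟨c, -, hc⟩ := Finset.exists_mem_notMem_of_card_lt_card
    (s := ({0, 1, -1, -2} : Finset F)) (t := Finset.univ)
    (Finset.card_le_four.trans_lt (by rw [Finset.card_univ, hq]; omega))
  simp only [Finset.mem_insert, Finset.mem_singleton, not_or] at hc
  obtain ⟨hc0, hc1, hcm1, hcm2⟩ := hc
  exact commGraph_pgl2_not_isPerfectGraph h2 hc0 hc1 hcm1 hcm2
end

section
/- Let K, L and M be finite non-abelian groups. Then the commuting graph Γ(K × L × M) of the direct product K × L × M is not perfect. -/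
/-!
Pick non-commuting pairs `a, a'`, `b, b'`, `c, c'` in the three factors. The five elements
`(a,1,1), (1,b,1), (a',1,c), (a',b',1), (1,b',c')` are non-central and two of them commute
exactly when they are consecutive on a 5-cycle, so the commuting graph contains an induced
5-cycle. An induced odd cycle of length at least 5 is triangle-free but not 2-colourable,
so on its vertex set the chromatic number exceeds the clique number.
-/

open SimpleGraph

namespace SimpleGraph

variable {V W : Type*} {G : SimpleGraph V} {H : SimpleGraph W}

theorem cycleGraph_adj_iff_val {n : ℕ} {u v : Fin (n + 2)} :
    (cycleGraph (n + 2)).Adj u v ↔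
      u.val + 1 = v.val ∨ v.val + 1 = u.val ∨ u.val = n + 1 ∧ v.val = 0 ∨
        v.val = n + 1 ∧ u.val = 0 := by
  have hsub : ∀ a b : Fin (n + 2), (a - b).val = 1 ↔
      a.val = b.val + 1 ∨ a.val = 0 ∧ b.val = n + 1 := fun a b => by
    rcases le_or_gt b a with h | h
    · rw [Fin.coe_sub_iff_le.mpr h]; omega
    · rw [Fin.coe_sub_iff_lt.mpr h]; omega
  rw [cycleGraph_adj', hsub, hsub]
  omega

theorem cycleGraph_cliqueFree_three {n : ℕ} (hn : 4 ≤ n) : (cycleGraph n).CliqueFree 3 := by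
  obtain ⟨n, rfl⟩ : ∃ m, n = m + 2 := ⟨n - 2, by omega⟩
  intro s hs
  obtain ⟨u, v, w, huv, huw, hvw, -⟩ := is3Clique_iff.mp hs
  rw [cycleGraph_adj_iff_val] at huv huw hvw
  omega

theorem IsPerfectGraph.colorable_of_cliqueFree {n : ℕ} (hG : G.IsPerfectGraph) (f : H ↪g G)
    (hH : H.CliqueFree (n + 1)) : H.Colorable n := by
  have hω : (G.induce (Set.range f)).cliqueNum ≤ n := by
    obtain ⟨t, ht⟩ := (G.induce (Set.range f)).exists_isNClique_cliqueNum
    by_contra! h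
    exact ht.not_cliqueFree ((hH.comap ⟨f.isoInduceRange.symm.toCopy⟩).mono h)
  rw [← chromaticNumber_le_iff_colorable]
  calc H.chromaticNumber ≤ (G.induce (Set.range f)).chromaticNumber :=
        chromaticNumber_mono_of_hom f.isoInduceRange.toHom
    _ = (G.induce (Set.range f)).cliqueNum := hG _
    _ ≤ n := by exact_mod_cast hω

theorem IsPerfectGraph.isEmpty_embedding_cycleGraph {n : ℕ} (hG : G.IsPerfectGraph)
    (hn : 4 ≤ n) (hodd : Odd n) : IsEmpty (cycleGraph n ↪g G) := by
  refine ⟨fun f => ?_⟩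
  have h := (hG.colorable_of_cliqueFree f (cycleGraph_cliqueFree_three hn)).chromaticNumber_le
  rw [chromaticNumber_cycleGraph_of_odd n (by omega) hodd] at h
  norm_num at h

end SimpleGraph

namespace commGraph

variable {G V : Type*} [Group G] {H : SimpleGraph V}

def embeddingOfCommute (f : V ↪ G) (hcen : ∀ v, f v ∉ Subgroup.center G)
    (hcomm : ∀ v w, Commute (f v) (f w) ↔ v = w ∨ H.Adj v w) : H ↪g commGraph G where
  toFun v := ⟨f v, hcen v⟩
  inj' _ _ h := f.injective (congrArg Subtype.val h)
  map_rel_iff' {v w} := by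
    change (⟨f v, hcen v⟩ : {g : G // g ∉ Subgroup.center G}) ≠ ⟨f w, hcen w⟩ ∧
      Commute (f v) (f w) ↔ H.Adj v w
    rw [Ne, Subtype.mk.injEq, hcomm, EmbeddingLike.apply_eq_iff_eq]
    exact ⟨fun ⟨hne, h⟩ => h.resolve_left hne, fun h => ⟨H.ne_of_adj h, .inr h⟩⟩

end commGraph

theorem nonempty_embedding_cycleGraph_five_commGraph_prod {K L M : Type*}
    [Group K] [Group L] [Group M] {a a' : K} {b b' : L} {c c' : M}
    (ha : ¬Commute a a') (hb : ¬Commute b b') (hc : ¬Commute c c') :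
    Nonempty (cycleGraph 5 ↪g commGraph (K × L × M)) := by
  let f : Fin 5 → K × L × M := ![(a, 1, 1), (1, b, 1), (a', 1, c), (a', b', 1), (1, b', c')]
  have hcomm : ∀ i j, Commute (f i) (f j) ↔ i = j ∨ (cycleGraph 5).Adj i j := by
    intro i j
    fin_cases i <;> fin_cases j <;>
      simp +decide [f, Prod.commute_iff, ha, hb, hc, Commute.symm_iff]
  have hinj : Function.Injective f := by
    have hnbhd : ∀ i j : Fin 5, (∀ k, (i = k ∨ (cycleGraph 5).Adj i k) ↔
        (j = k ∨ (cycleGraph 5).Adj j k)) → i = j := by decide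
    exact fun i j hij => hnbhd i j fun k => by rw [← hcomm, ← hcomm, hij]
  have hcen : ∀ i, f i ∉ Subgroup.center (K × L × M) := by
    have hnonadj : ∀ k : Fin 5, ∃ j, ¬(k = j ∨ (cycleGraph 5).Adj k j) := by decide
    intro i hi
    obtain ⟨j, hj⟩ := hnonadj i
    exact hj ((hcomm i j).mp (Subgroup.mem_center_iff.mp hi (f j)).symm)
  exact ⟨commGraph.embeddingOfCommute ⟨f, hinj⟩ hcen hcomm⟩

theorem prod_three_nonabelian_commGraph_not_isPerfect_general
    (K L M : Type*) [Group K] [Group L] [Group M]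
    (hK : ∃ x y : K, x * y ≠ y * x)
    (hL : ∃ x y : L, x * y ≠ y * x)
    (hM : ∃ x y : M, x * y ≠ y * x) :
    ¬ (commGraph (K × L × M)).IsPerfectGraph := by
  obtain ⟨a, a', ha⟩ := hK
  obtain ⟨b, b', hb⟩ := hL
  obtain ⟨c, c', hc⟩ := hM
  obtain ⟨f⟩ := nonempty_embedding_cycleGraph_five_commGraph_prod ha hb hc
  exact fun hperf => (hperf.isEmpty_embedding_cycleGraph (by norm_num) (by decide)).false f

theorem prod_three_nonabelian_commGraph_not_isPerfect
    (K L M : Type*) [Group K] [Group L] [Group M]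
    [Finite K] [Finite L] [Finite M]
    (hK : ∃ x y : K, x * y ≠ y * x)
    (hL : ∃ x y : L, x * y ≠ y * x)
    (hM : ∃ x y : M, x * y ≠ y * x) :
    ¬ (commGraph (K × L × M)).IsPerfectGraph :=
  prod_three_nonabelian_commGraph_not_isPerfect_general K L M hK hL hM
end
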